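/- If there exists a minimum-cardinality 1-generator I for f (with some seed), then I is also a minimum-cardinality 1-generator with seed z_F|_I. In particular, the minimum size of a 1-generator is achieved with seed z_F restricted to the generator set. -/
import Mathlib


open Finset

noncomputable def restr {N : ℕ} (I : Finset (Fin N)) (y : Fin N → ℝ) : Fin N → ℝ :=
  fun i => if i ∈ I then y i else 0

noncomputable def dotp {N : ℕ} (w x : Fin N → ℝ) : ℝ := ∑ i, w i * x i

noncomputable def zF {N : ℕ} (w : Fin N → ℝ) : Fin N → ℝ :=
  fun i => if 0 ≤ w i then 1 else 0

noncomputable def zM {N : ℕ} (w : Fin N → ℝ) : Fin N → ℝ :=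
  fun i => if w i ≤ 0 then 1 else 0

/-- `I` is a 1-generator for the classifier `x ↦ (w·x + b ≥ 0)` on data `G`
with seed `s` (supported on `I`): for every restriction of a data vector to
the complement of `I`, the classifier outputs 1 on the combined vector. -/
noncomputable def IsOneGen {N : ℕ} (w : Fin N → ℝ) (b : ℝ)
    (G : Set (Fin N → ℝ)) (I : Finset (Fin N)) (s : Fin N → ℝ) : Prop :=
  ∀ x ∈ G, 0 ≤ dotp w (fun i => s i + restr Iᶜ x i) + b

/-- `I` is a 0-generator: the classifier outputs 0 on every combined vector. -/
noncomputable def IsZeroGen {N : ℕ} (w : Fin N → ℝ) (b : ℝ)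
    (G : Set (Fin N → ℝ)) (I : Finset (Fin N)) (s : Fin N → ℝ) : Prop :=
  ∀ x ∈ G, dotp w (fun i => s i + restr Iᶜ x i) + b < 0

theorem min_oneGen_achieved_with_zF {N : ℕ} (w : Fin N → ℝ) (b : ℝ)
    (G : Set (Fin N → ℝ)) (hG : G.Finite)
    (I : Finset (Fin N)) (s : Fin N → ℝ)
    (hsupp : ∀ i, i ∉ I → s i = 0)
    (hcube : ∀ i, 0 ≤ s i ∧ s i ≤ 1)
    (hgen : IsOneGen w b G I s)
    (hmin : ∀ (J : Finset (Fin N)) (t : Fin N → ℝ),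
      (∀ i, i ∉ J → t i = 0) → (∀ i, 0 ≤ t i ∧ t i ≤ 1) →
      IsOneGen w b G J t → I.card ≤ J.card) :
    IsOneGen w b G I (restr I (zF w)) ∧
    ∀ (J : Finset (Fin N)) (t : Fin N → ℝ),
      (∀ i, i ∉ J → t i = 0) → (∀ i, 0 ≤ t i ∧ t i ≤ 1) →
      IsOneGen w b G J t → I.card ≤ J.card := by
  refine ⟨?_, hmin⟩
  intro x hx
  have h := hgen x hx
  refine le_trans h ?_
  gcongr ?_ + b
  unfold dotp
  apply Finset.sum_le_sum
  intro i _
  have hterm : w i * s i ≤ w i * restr I (zF w) i := by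
    by_cases hi : i ∈ I
    · simp only [restr, zF, hi, if_pos]
      rcases le_or_gt 0 (w i) with hw | hw
      · simp only [hw, if_pos]
        nlinarith [(hcube i).2]
      · rw [if_neg (not_le.mpr hw)]
        nlinarith [(hcube i).1]
    · simp [restr, hi, hsupp i hi]
  show w i * (s i + restr Iᶜ x i) ≤ w i * (restr I (zF w) i + restr Iᶜ x i)
  nlinarith [hterm]
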